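/- Define a sequence of reals by a_1 = 1/2 and a_{k+1} = (2a_k − a_k³)/2 for k ≥ 1. Then for each fixed integer k ≥ 1, the threshold sequence satisfies lim_{N→∞} t_{N−k}^{(N)} / N = a_k. -/

import Mathlib

open Filter Real

/-- Auxiliary backwards recurrence: `tAux N n` equals `t_{N-1-n}^{(N)}`, where
`t_{N-1} = N/2` and `t_{i-1} = (s_i²(s_i+1) + 2(i² − s_i²) t_i) / (2 i (i+1))`
with `s_i = ⌊t_i⌋`. -/
noncomputable def tAux (N : ℕ) : ℕ → ℝ
  | 0 => (N : ℝ) / 2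
  | n + 1 =>
      let i : ℝ := (N : ℝ) - 1 - (n : ℝ)
      let t : ℝ := tAux N n
      let s : ℝ := (⌊t⌋ : ℝ)
      (s ^ 2 * (s + 1) + 2 * (i ^ 2 - s ^ 2) * t) / (2 * i * (i + 1))

/-- The equilibrium threshold sequence `t_i^{(N)}` of the two-sided secretary game,
for `0 ≤ i ≤ N-1`. -/
noncomputable def tgame (N i : ℕ) : ℝ := tAux N (N - 1 - i)

/-- The sequence `a_1 = 1/2`, `a_{k+1} = (2a_k − a_k³)/2`; here `aseq n = a_{n+1}`. -/
noncomputable def aseq : ℕ → ℝ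
  | 0 => 1 / 2
  | n + 1 => (2 * aseq n - (aseq n) ^ 3) / 2

/-!
The recurrence step `(s²(s+h) + 2(i² − s²)t) / (2i(i+h))`, with `h = 1`, is homogeneous of degree
one in `(s, t, i, h)`. Dividing by `N` therefore turns `t_{N-1-n}/N` into the same step applied to
`⌊t⌋/N`, `t/N`, `i/N` and `1/N`, whose limits are `a`, `a`, `1` and `0` (the floor moves by less
than one). By continuity the limits obey `a ↦ (a³ + 2(1 − a²)a)/2 = (2a − a³)/2`.
-/

noncomputable def thresholdStep (s t i h : ℝ) : ℝ :=
  (s ^ 2 * (s + h) + 2 * (i ^ 2 - s ^ 2) * t) / (2 * i * (i + h))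

lemma thresholdStep_div (s t i h c : ℝ) :
    thresholdStep s t i h / c = thresholdStep (s / c) (t / c) (i / c) (h / c) := by
  rcases eq_or_ne c 0 with rfl | hc
  · simp [thresholdStep]
  · unfold thresholdStep
    rcases eq_or_ne i 0 with rfl | hi
    · simp
    rcases eq_or_ne (i + h) 0 with hih | hih
    · have hih' : i / c + h / c = 0 := by rw [← add_div, hih, zero_div]
      simp [hih, hih']
    have hih' : i / c + h / c ≠ 0 := by rw [← add_div]; exact div_ne_zero hih hc
    field_simp

lemma Filter.Tendsto.thresholdStep {α : Type*} {l : Filter α} {s t i h : α → ℝ} {a b c d : ℝ}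
    (hs : Tendsto s l (nhds a)) (ht : Tendsto t l (nhds b)) (hi : Tendsto i l (nhds c))
    (hh : Tendsto h l (nhds d)) (hcd : 2 * c * (c + d) ≠ 0) :
    Tendsto (fun x => thresholdStep (s x) (t x) (i x) (h x)) l
      (nhds (thresholdStep a b c d)) :=
  (((hs.pow 2).mul (hs.add hh)).add
    ((tendsto_const_nhds.mul ((hi.pow 2).sub (hs.pow 2))).mul ht)).div
    ((tendsto_const_nhds.mul hi).mul (hi.add hh)) hcd

lemma tAux_succ (N n : ℕ) :
    tAux N (n + 1) = thresholdStep ⌊tAux N n⌋ (tAux N n) ((N : ℝ) - 1 - n) 1 :=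
  rfl

lemma aseq_succ (n : ℕ) : aseq (n + 1) = thresholdStep (aseq n) (aseq n) 1 0 := by
  simp only [aseq, thresholdStep]
  ring

lemma tendsto_natCast_sub_div_self (c : ℝ) :
    Tendsto (fun N : ℕ => ((N : ℝ) - c) / N) atTop (nhds 1) := by
  have h := (tendsto_const_nhds (x := (1 : ℝ))).sub (tendsto_const_div_atTop_nhds_zero_nat c)
  rw [sub_zero] at h
  refine h.congr' ?_
  filter_upwards [eventually_ne_atTop 0] with N hN
  rw [sub_div, div_self (Nat.cast_ne_zero.mpr hN)]

lemma tendsto_floor_div_natCast {f : ℕ → ℝ} {a : ℝ}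
    (hf : Tendsto (fun N => f N / N) atTop (nhds a)) :
    Tendsto (fun N : ℕ => (⌊f N⌋ : ℝ) / N) atTop (nhds a) := by
  have hlower : Tendsto (fun N : ℕ => f N / N - 1 / N) atTop (nhds a) := by
    simpa using hf.sub tendsto_one_div_atTop_nhds_zero_nat
  refine tendsto_of_tendsto_of_tendsto_of_le_of_le hlower hf (fun N => ?_) (fun N => ?_)
  · rw [div_sub_div_same]
    gcongr
    exact (Int.sub_one_lt_floor _).le
  · gcongr
    exact Int.floor_le _

lemma tendsto_tAux_div (n : ℕ) :
    Tendsto (fun N : ℕ => tAux N n / N) atTop (nhds (aseq n)) := by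
  induction n with
  | zero =>
    refine tendsto_const_nhds.congr' ?_
    filter_upwards [eventually_ne_atTop 0] with N hN
    simp only [tAux, aseq]
    field_simp
  | succ n ih =>
    simp only [tAux_succ, thresholdStep_div, aseq_succ, sub_sub]
    exact (tendsto_floor_div_natCast ih).thresholdStep ih (tendsto_natCast_sub_div_self _)
      tendsto_one_div_atTop_nhds_zero_nat (by norm_num)

theorem top_threshold_asymptotics_general (k : ℕ) :
    Tendsto (fun N : ℕ => tgame N (N - k) / (N : ℝ)) atTop (nhds (aseq (k - 1))) := by
  refine (tendsto_tAux_div (k - 1)).congr' ?_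
  filter_upwards [eventually_ge_atTop k] with N hN
  rw [tgame, show N - 1 - (N - k) = k - 1 by omega]

/-- For each fixed `k ≥ 1`, the threshold sequence satisfies `t_{N−k}^{(N)}/N → a_k`. -/
theorem top_threshold_asymptotics (k : ℕ) (hk : 1 ≤ k) :
    Tendsto (fun N : ℕ => tgame N (N - k) / (N : ℝ)) atTop (nhds (aseq (k - 1))) :=
  top_threshold_asymptotics_general k
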